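/- Suppose the upper bound of the support of Y is finite. If there exist norming constants b_n > 0 and a non-degenerate distribution function G_x such that b_n^{-1}(φ̂_1(x) − φ(x)) converges in distribution to G_x, then b_n^{-1}(φ̂_{α_n}(x) − φ(x)) converges in distribution to G_x for every sequence α_n → 1 satisfying n b_n^{-1}(1 − α_n) → 0. -/

import Mathlib

open MeasureTheory ProbabilityTheory Filter Set Asymptotics Topology

noncomputable section

namespace FrontierEV

variable {Ω : Type*} [MeasureSpace Ω] {p : ℕ}

/-- Joint distribution function `F(x,y) = P(X ≤ x, Y ≤ y)` of the pair `(X 0, Y 0)`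
(inequalities on `Fin p → ℝ` are componentwise). -/
def jointF (X : ℕ → Ω → (Fin p → ℝ)) (Y : ℕ → Ω → ℝ) (x : Fin p → ℝ) (y : ℝ) : ℝ :=
  (ℙ {ω | X 0 ω ≤ x ∧ Y 0 ω ≤ y}).toReal

/-- Marginal distribution function `F_X(x) = P(X ≤ x)`. -/
def margF (X : ℕ → Ω → (Fin p → ℝ)) (x : Fin p → ℝ) : ℝ :=
  (ℙ {ω | X 0 ω ≤ x}).toReal

/-- Conditional distribution function `F(y|x) = F(x,y)/F_X(x)` of `Y` given `X ≤ x`. -/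
def condF (X : ℕ → Ω → (Fin p → ℝ)) (Y : ℕ → Ω → ℝ) (x : Fin p → ℝ) (y : ℝ) : ℝ :=
  jointF X Y x y / margF X x

/-- The frontier function `φ(x) = sup {y ≥ 0 : F(y|x) < 1}`. -/
def phi (X : ℕ → Ω → (Fin p → ℝ)) (Y : ℕ → Ω → ℝ) (x : Fin p → ℝ) : ℝ :=
  sSup {y : ℝ | 0 ≤ y ∧ condF X Y x y < 1}

/-- The conditional quantile `φ_α(x) = inf {y ≥ 0 : F(y|x) ≥ α}`. -/
def condQ (X : ℕ → Ω → (Fin p → ℝ)) (Y : ℕ → Ω → ℝ) (α : ℝ) (x : Fin p → ℝ) : ℝ :=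
  sInf {y : ℝ | 0 ≤ y ∧ α ≤ condF X Y x y}

open Classical in
/-- Empirical joint distribution function. -/
def empJointF (X : ℕ → Ω → (Fin p → ℝ)) (Y : ℕ → Ω → ℝ) (n : ℕ) (x : Fin p → ℝ) (y : ℝ)
    (ω : Ω) : ℝ :=
  (∑ i ∈ Finset.range n, if X i ω ≤ x ∧ Y i ω ≤ y then (1 : ℝ) else 0) / n

open Classical in
/-- Empirical marginal distribution function. -/
def empMargF (X : ℕ → Ω → (Fin p → ℝ)) (n : ℕ) (x : Fin p → ℝ) (ω : Ω) : ℝ :=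
  (∑ i ∈ Finset.range n, if X i ω ≤ x then (1 : ℝ) else 0) / n

/-- Empirical conditional distribution function. -/
def empCondF (X : ℕ → Ω → (Fin p → ℝ)) (Y : ℕ → Ω → ℝ) (n : ℕ) (x : Fin p → ℝ) (y : ℝ)
    (ω : Ω) : ℝ :=
  empJointF X Y n x y ω / empMargF X n x ω

/-- Empirical conditional quantile `φ̂_α(x)`. -/
def empCondQ (X : ℕ → Ω → (Fin p → ℝ)) (Y : ℕ → Ω → ℝ) (n : ℕ) (α : ℝ) (x : Fin p → ℝ)
    (ω : Ω) : ℝ :=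
  sInf {y : ℝ | 0 ≤ y ∧ α ≤ empCondF X Y n x y ω}

/-- The FDH estimator `φ̂_1(x) = max {Y_i : X_i ≤ x, i < n}`. -/
def fdh (X : ℕ → Ω → (Fin p → ℝ)) (Y : ℕ → Ω → ℝ) (n : ℕ) (x : Fin p → ℝ) (ω : Ω) : ℝ :=
  sSup {y : ℝ | ∃ i < n, X i ω ≤ x ∧ Y i ω = y}

/-- The data `(X_i, Y_i)` are i.i.d. copies of `(X 0, Y 0)`. -/
def IID (X : ℕ → Ω → (Fin p → ℝ)) (Y : ℕ → Ω → ℝ) : Prop :=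
  (∀ i, Measurable fun ω => (X i ω, Y i ω)) ∧
  iIndepFun (fun i ω => (X i ω, Y i ω)) ℙ ∧
  ∀ i, IdentDistrib (fun ω => (X i ω, Y i ω)) (fun ω => (X 0 ω, Y 0 ω)) ℙ ℙ

/-- `G` is a distribution function. -/
def IsCDF (G : ℝ → ℝ) : Prop :=
  Monotone G ∧ (∀ y, ContinuousWithinAt G (Ici y) y) ∧
    Tendsto G atBot (𝓝 0) ∧ Tendsto G atTop (𝓝 1)

/-- A distribution function is non-degenerate if it is not the distribution function of a
point mass. -/
def NonDegenerate (G : ℝ → ℝ) : Prop :=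
  ∃ y, 0 < G y ∧ G y < 1

/-- Convergence in distribution of real random variables towards the distribution
function `G`: convergence of the distribution functions at every continuity point of `G`. -/
def TendstoInDist (W : ℕ → Ω → ℝ) (G : ℝ → ℝ) : Prop :=
  ∀ y : ℝ, ContinuousAt G y →
    Tendsto (fun n => (ℙ {ω | W n ω ≤ y}).toReal) atTop (𝓝 (G y))

/-- The extreme-value Weibull distribution function `Ψ_ρ(y) = exp(-(-y)^ρ)` for `y ≤ 0`,
`= 1` for `y > 0`. -/
def PsiEV (ρ y : ℝ) : ℝ :=
  if y ≤ 0 then Real.exp (-((-y) ^ ρ)) else 1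

/-- The `Weibull(1,ρ)` distribution function: `W^ρ` is exponential with parameter 1. -/
def weibullCDF (ρ y : ℝ) : ℝ :=
  if 0 ≤ y then 1 - Real.exp (-(y ^ ρ)) else 0

/-- The distribution function of a centered normal distribution with variance `v`. -/
def normalCDF (v y : ℝ) : ℝ :=
  ((gaussianReal 0 (Real.toNNReal v)) (Iic y)).toReal

/-- Condition (2.2): `1 - F(φ(x) - 1/t | x)` is regularly varying with exponent `-ρ`. -/
def Cond22 (X : ℕ → Ω → (Fin p → ℝ)) (Y : ℕ → Ω → ℝ) (x : Fin p → ℝ) (ρ : ℝ) : Prop :=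
  ∀ z > 0, Tendsto
    (fun t => (1 - condF X Y x (phi X Y x - 1 / (t * z))) /
      (1 - condF X Y x (phi X Y x - 1 / t)))
    atTop (𝓝 (z ^ (-ρ)))

/-- Regular variation at infinity with index `τ`. -/
def RegVary (h : ℝ → ℝ) (τ : ℝ) : Prop :=
  ∀ z > 0, Tendsto (fun t => h (t * z) / h t) atTop (𝓝 (z ^ τ))

/-- Generalized inverse of a function `g : ℝ → ℝ`. -/
def genInv (g : ℝ → ℝ) (y : ℝ) : ℝ :=
  sInf {t : ℝ | y ≤ g t}

/-- Exact-power tail condition: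
`F_X(x)[1 - F(y|x)] = ℓ (φ(x) - y)^ρ` for all `y < φ(x)` close enough to `φ(x)`. -/
def ExactPowerTail (X : ℕ → Ω → (Fin p → ℝ)) (Y : ℕ → Ω → ℝ) (x : Fin p → ℝ)
    (ℓ ρ : ℝ) : Prop :=
  ∃ y₀ < phi X Y x, ∀ y, y₀ ≤ y → y < phi X Y x →
    margF X x * (1 - condF X Y x y) = ℓ * (phi X Y x - y) ^ ρ

/-- The function `U(t) = φ_{1 - 1/(t F_X(x))}(x)`. -/
def Ufun (X : ℕ → Ω → (Fin p → ℝ)) (Y : ℕ → Ω → ℝ) (x : Fin p → ℝ) (t : ℝ) : ℝ :=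
  condQ X Y (1 - 1 / (t * margF X x)) x

/-- The Pickands-type estimator `ρ̂_x` with threshold `k`. -/
def pickands (X : ℕ → Ω → (Fin p → ℝ)) (Y : ℕ → Ω → ℝ) (n k : ℕ) (x : Fin p → ℝ)
    (ω : Ω) : ℝ :=
  Real.log 2 / Real.log
    ((empCondQ X Y n (1 - (2 * (k : ℝ) - 1) / ((n : ℝ) * empMargF X n x ω)) x ω -
        empCondQ X Y n (1 - (4 * (k : ℝ) - 1) / ((n : ℝ) * empMargF X n x ω)) x ω) /
      (empCondQ X Y n (1 - ((k : ℝ) - 1) / ((n : ℝ) * empMargF X n x ω)) x ω -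
        empCondQ X Y n (1 - (2 * (k : ℝ) - 1) / ((n : ℝ) * empMargF X n x ω)) x ω))

/-- The statistic `M^{(j)}_n`. -/
def Mstat (X : ℕ → Ω → (Fin p → ℝ)) (Y : ℕ → Ω → ℝ) (n k j : ℕ) (x : Fin p → ℝ)
    (ω : Ω) : ℝ :=
  (∑ i ∈ Finset.range k,
      (Real.log (empCondQ X Y n (1 - (i : ℝ) / ((n : ℝ) * empMargF X n x ω)) x ω) -
        Real.log (empCondQ X Y n (1 - (k : ℝ) / ((n : ℝ) * empMargF X n x ω)) x ω)) ^ j) / k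

/-- The moment-type estimator `ρ̃_x` with threshold `k`. -/
def momentEst (X : ℕ → Ω → (Fin p → ℝ)) (Y : ℕ → Ω → ℝ) (n k : ℕ) (x : Fin p → ℝ)
    (ω : Ω) : ℝ :=
  -(Mstat X Y n k 1 x ω + 1 -
      (1 / 2) * (1 - (Mstat X Y n k 1 x ω) ^ 2 / Mstat X Y n k 2 x ω)⁻¹)⁻¹

/-!
Once `n (1 - α_n) < 1`, no observation with `X_i ≤ x` may lie strictly above the empirical
`α_n`-quantile, so for nonnegative responses `φ̂_{α_n}(x)` is exactly the FDH estimator `φ̂_1(x)`.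
The rate condition gives `n (1 - α_n) → 0` as soon as `b_n → 0`, and this follows from the
non-degeneracy of `G`: since `φ̂_1(x) ≤ φ(x)` a.s., `G` charges some `y < 0`, whereas
`P(φ̂_1(x) ≤ φ(x) - δ)` decays geometrically for every `δ > 0`.
-/

section EmpiricalQuantile

open Finset Classical

lemma le_natCast_div_iff_eq {α : ℝ} {k m : ℕ} (hkm : k ≤ m) (hm : 0 < m) (hα : α ≤ 1)
    (hmα : (m : ℝ) * (1 - α) < 1) : α ≤ (k : ℝ) / m ↔ k = m := by
  have hm' : (0 : ℝ) < m := by exact_mod_cast hm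
  refine ⟨fun h => ?_, fun h => by rwa [h, div_self hm'.ne']⟩
  by_contra hne
  have hk : (k : ℝ) + 1 ≤ m := by exact_mod_cast lt_of_le_of_ne hkm hne
  rw [le_div_iff₀ hm'] at h
  nlinarith

lemma sInf_quantile_eq_sSup {ι : Type*} (A : Finset ι) (v : ι → ℝ) (hv : ∀ i ∈ A, 0 ≤ v i)
    {α : ℝ} (hα0 : 0 < α) (hα1 : α ≤ 1) (hA : (#A : ℝ) * (1 - α) < 1) :
    sInf {y : ℝ | 0 ≤ y ∧ α ≤ (#{i ∈ A | v i ≤ y} : ℝ) / #A} = sSup (v '' A) := by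
  rcases A.eq_empty_or_nonempty with rfl | hne
  · simp [not_le.2 hα0]
  have hkey : ∀ y, (0 ≤ y ∧ α ≤ (#{i ∈ A | v i ≤ y} : ℝ) / #A) ↔ sSup (v '' A) ≤ y := by
    intro y
    rw [le_natCast_div_iff_eq (card_filter_le _ _) hne.card_pos hα1 hA, card_filter_eq_iff,
      csSup_le_iff (A.finite_toSet.image v).bddAbove (hne.to_set.image v) |>.trans
        Set.forall_mem_image]
    obtain ⟨i, hi⟩ := hne
    exact ⟨fun h => h.2, fun h => ⟨(hv i hi).trans (h hi), h⟩⟩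
  exact (congrArg sInf (Set.ext hkey)).trans csInf_Ici

omit [MeasureSpace Ω]

variable (X : ℕ → Ω → (Fin p → ℝ)) (Y : ℕ → Ω → ℝ) (n : ℕ) (x : Fin p → ℝ) (ω : Ω)

lemma fdh_eq_sSup_image :
    fdh X Y n x ω = sSup ((Y · ω) '' ↑({i ∈ range n | X i ω ≤ x} : Finset ℕ)) := by
  rw [fdh]
  congr 1
  ext y
  simp [and_assoc]

lemma empCondF_eq_card_div_card (y : ℝ) :
    empCondF X Y n x y ω =
      (#{i ∈ {i ∈ range n | X i ω ≤ x} | Y i ω ≤ y} : ℝ) / #{i ∈ range n | X i ω ≤ x} := by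
  rcases n.eq_zero_or_pos with rfl | hn
  · simp [empCondF, empJointF, empMargF]
  rw [empCondF, empJointF, empMargF, sum_boole, sum_boole, filter_filter,
    div_div_div_cancel_right₀ (by positivity)]

variable {X Y n x ω}

lemma le_fdh {i : ℕ} (hi : i < n) (hX : X i ω ≤ x) : Y i ω ≤ fdh X Y n x ω := by
  rw [fdh_eq_sSup_image]
  exact le_csSup ((finite_toSet _).image _).bddAbove ⟨i, by simp [hi, hX], rfl⟩

lemma fdh_le {c : ℝ} (hc : 0 ≤ c) (h : ∀ i < n, X i ω ≤ x → Y i ω ≤ c) :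
    fdh X Y n x ω ≤ c :=
  Real.sSup_le (by rintro _ ⟨i, hi, hX, rfl⟩; exact h i hi hX) hc

lemma empCondQ_eq_fdh {α : ℝ} (hα0 : 0 < α) (hα1 : α ≤ 1) (hn : (n : ℝ) * (1 - α) < 1)
    (hY : ∀ i < n, 0 ≤ Y i ω) : empCondQ X Y n α x ω = fdh X Y n x ω := by
  have hcard : (#{i ∈ range n | X i ω ≤ x} : ℝ) ≤ n := by
    exact_mod_cast (card_filter_le _ _).trans (card_range n).le
  have hA : (#{i ∈ range n | X i ω ≤ x} : ℝ) * (1 - α) < 1 :=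
    (mul_le_mul_of_nonneg_right hcard (by linarith)).trans_lt hn
  simp only [empCondQ, empCondF_eq_card_div_card, fdh_eq_sSup_image]
  exact sInf_quantile_eq_sSup _ _ (fun i hi => hY i (mem_range.1 (mem_filter.1 hi).1)) hα0 hα1 hA

end EmpiricalQuantile

section ConditionalDistribution

variable {X : ℕ → Ω → (Fin p → ℝ)} {Y : ℕ → Ω → ℝ} {x : Fin p → ℝ}

lemma phi_nonneg : 0 ≤ phi X Y x := Real.sSup_nonneg fun _ hy => hy.1

variable [IsFiniteMeasure (ℙ : Measure Ω)]

variable (X Y x) in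
lemma condF_mono : Monotone (condF X Y x) := fun _ _ h =>
  div_le_div_of_nonneg_right (measureReal_mono fun _ hω => ⟨hω.1, hω.2.trans h⟩)
    measureReal_nonneg

lemma condF_le_one (hx : 0 < margF X x) (y : ℝ) : condF X Y x y ≤ 1 :=
  (div_le_one hx).2 (measureReal_mono fun _ hω => hω.1)

lemma condF_eq_one_iff (hmeas : Measurable fun ω => (X 0 ω, Y 0 ω)) (hx : 0 < margF X x)
    (c : ℝ) : condF X Y x c = 1 ↔ (ℙ {ω | X 0 ω ≤ x ∧ c < Y 0 ω}).toReal = 0 := by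
  have hdiff : {ω | X 0 ω ≤ x} \ {ω | Y 0 ω ≤ c} = {ω | X 0 ω ≤ x ∧ c < Y 0 ω} := by
    ext ω; simp
  have hsplit : jointF X Y x c + (ℙ {ω | X 0 ω ≤ x ∧ c < Y 0 ω}).toReal = margF X x := by
    rw [← hdiff]
    exact measureReal_inter_add_sdiff (measurableSet_le hmeas.snd measurable_const)
  rw [condF, div_eq_one_iff_eq hx.ne', ← hsplit]
  constructor <;> intro h <;> linarith

lemma condF_eq_one_of_phi_lt (hx : 0 < margF X x)
    (hphi : BddAbove {y : ℝ | 0 ≤ y ∧ condF X Y x y < 1}) {t : ℝ} (ht : phi X Y x < t) :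
    condF X Y x t = 1 :=
  (condF_le_one hx t).antisymm <| not_lt.1 fun h =>
    ht.not_ge (le_csSup hphi ⟨phi_nonneg.trans ht.le, h⟩)

lemma condF_lt_one_of_lt_phi (hY : ∀ᵐ ω, 0 ≤ Y 0 ω) {c : ℝ} (hc : c < phi X Y x) :
    condF X Y x c < 1 := by
  rcases lt_or_ge c 0 with hc0 | hc0
  · have hjoint : jointF X Y x c = 0 := by
      refine (measureReal_eq_zero_iff).2 (measure_mono_null (fun ω hω => ?_) (ae_iff.1 hY))
      exact not_le.2 (hω.2.trans_lt hc0)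
    rw [condF, hjoint, zero_div]
    exact one_pos
  · have hne : {y : ℝ | 0 ≤ y ∧ condF X Y x y < 1}.Nonempty := by
      by_contra h
      rw [Set.not_nonempty_iff_eq_empty] at h
      rw [phi, h, Real.sSup_empty] at hc
      linarith
    obtain ⟨y, ⟨_, hy⟩, hcy⟩ := exists_lt_of_lt_csSup hne hc
    exact (condF_mono X Y x hcy.le).trans_lt hy

lemma measure_exceed_pos_of_lt_phi (hmeas : Measurable fun ω => (X 0 ω, Y 0 ω))
    (hx : 0 < margF X x) (hY : ∀ᵐ ω, 0 ≤ Y 0 ω) {c : ℝ} (hc : c < phi X Y x) :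
    0 < (ℙ {ω | X 0 ω ≤ x ∧ c < Y 0 ω}).toReal :=
  measureReal_nonneg.lt_of_ne fun h =>
    (condF_lt_one_of_lt_phi hY hc).ne ((condF_eq_one_iff hmeas hx c).2 h.symm)

end ConditionalDistribution

section Sample

variable {X : ℕ → Ω → (Fin p → ℝ)} {Y : ℕ → Ω → ℝ} {x : Fin p → ℝ}

lemma IID.ae_forall_mem (hiid : IID X Y) {t : Set ((Fin p → ℝ) × ℝ)} (ht : MeasurableSet t)
    (h0 : ∀ᵐ ω, (X 0 ω, Y 0 ω) ∈ t) : ∀ᵐ ω, ∀ i, (X i ω, Y i ω) ∈ t :=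
  ae_all_iff.2 fun i => (hiid.2.2 i).symm.ae_mem_snd ht h0

lemma IID.ae_nonneg (hiid : IID X Y) (hY : ∀ᵐ ω, 0 ≤ Y 0 ω) : ∀ᵐ ω, ∀ i, 0 ≤ Y i ω :=
  (hiid.ae_forall_mem (MeasurableSet.univ.prod measurableSet_Ici)
    (hY.mono fun _ h => ⟨Set.mem_univ _, h⟩)).mono fun _ h i => (h i).2

lemma IID.fdh_le_phi [IsFiniteMeasure (ℙ : Measure Ω)] (hiid : IID X Y) (hx : 0 < margF X x)
    (hphi : BddAbove {y : ℝ | 0 ≤ y ∧ condF X Y x y < 1}) (n : ℕ) :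
    ∀ᵐ ω, fdh X Y n x ω ≤ phi X Y x := by
  set φ := phi X Y x
  have hnull : ℙ {ω | X 0 ω ≤ x ∧ φ < Y 0 ω} = 0 := by
    have hsub : {ω | X 0 ω ≤ x ∧ φ < Y 0 ω}
        ⊆ ⋃ k : ℕ, {ω | X 0 ω ≤ x ∧ φ + 1 / ((k : ℝ) + 1) < Y 0 ω} := by
      rintro ω ⟨hX, hY⟩
      obtain ⟨k, hk⟩ := exists_nat_one_div_lt (sub_pos.2 hY)
      exact Set.mem_iUnion.2 ⟨k, hX, by linarith⟩
    refine measure_mono_null hsub (measure_iUnion_null fun k => ?_)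
    refine (measureReal_eq_zero_iff).1 <| (condF_eq_one_iff (hiid.1 0) hx _).1 <|
      condF_eq_one_of_phi_lt hx hphi ?_
    have : (0 : ℝ) < 1 / ((k : ℝ) + 1) := by positivity
    linarith
  have hbelow := hiid.ae_forall_mem (measurableSet_Iic.prod measurableSet_Ioi).compl
    (measure_eq_zero_iff_ae_notMem.1 hnull)
  filter_upwards [hbelow] with ω hω
  exact fdh_le phi_nonneg fun i _ hX => not_lt.1 fun hY => hω i ⟨hX, hY⟩

/-- By independence, `P(φ̂_1(x) ≤ c) ≤ (1 - q) ^ n` with `q = P(X ≤ x, Y > c)`. -/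
lemma IID.tendsto_measure_fdh_le [IsProbabilityMeasure (ℙ : Measure Ω)] (hiid : IID X Y)
    {c : ℝ}
    (hq : 0 < (ℙ {ω | X 0 ω ≤ x ∧ c < Y 0 ω}).toReal) :
    Tendsto (fun n => (ℙ {ω | fdh X Y n x ω ≤ c}).toReal) atTop (𝓝 0) := by
  set S : Set ((Fin p → ℝ) × ℝ) := Iic x ×ˢ Ioi c
  have hS : MeasurableSet S := measurableSet_Iic.prod measurableSet_Ioi
  set q := (ℙ {ω | X 0 ω ≤ x ∧ c < Y 0 ω}).toReal
  have hcompl : ∀ i, (ℙ ((fun ω => (X i ω, Y i ω)) ⁻¹' Sᶜ)).toReal = 1 - q := fun i => by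
    rw [(hiid.2.2 i).measure_mem_eq hS.compl, ← measureReal_def, Set.preimage_compl,
      probReal_compl_eq_one_sub (hiid.1 0 hS)]
    rfl
  have hbound : ∀ n, (ℙ {ω | fdh X Y n x ω ≤ c}).toReal ≤ (1 - q) ^ n := fun n => by
    have hsub : {ω | fdh X Y n x ω ≤ c}
        ⊆ ⋂ i ∈ Finset.range n, (fun ω => (X i ω, Y i ω)) ⁻¹' Sᶜ := by
      intro ω hω
      simp only [Set.mem_iInter, Set.mem_preimage, Set.mem_compl_iff, S, Set.mem_prod,
        Set.mem_Iic, Set.mem_Ioi, not_and, not_lt]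
      exact fun i hi hX => (le_fdh (Finset.mem_range.1 hi) hX).trans hω
    calc (ℙ {ω | fdh X Y n x ω ≤ c}).toReal
        ≤ (ℙ (⋂ i ∈ Finset.range n, (fun ω => (X i ω, Y i ω)) ⁻¹' Sᶜ)).toReal :=
          measureReal_mono hsub
      _ = (1 - q) ^ n := by
          rw [hiid.2.1.measure_inter_preimage_eq_mul _ fun _ _ => hS.compl, ENNReal.toReal_prod,
            Finset.prod_congr rfl fun i _ => hcompl i, Finset.prod_const, Finset.card_range]
  exact squeeze_zero (fun _ => measureReal_nonneg) hbound
    (tendsto_pow_atTop_nhds_zero_of_lt_one (sub_nonneg.2 measureReal_le_one) (by linarith))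

end Sample

section DistributionFunction

variable {G : ℝ → ℝ}

lemma exists_continuousAt_mem_Ioo (hG : Monotone G) {a c : ℝ} (hac : a < c) :
    ∃ t ∈ Ioo a c, ContinuousAt G t := by
  obtain ⟨t, ht, htac⟩ := (hG.countable_not_continuousAt.dense_compl ℝ).exists_mem_open
    isOpen_Ioo (nonempty_Ioo.2 hac)
  exact ⟨t, htac, not_not.1 ht⟩

lemma IsCDF.le_one (hG : IsCDF G) (y : ℝ) : G y ≤ 1 :=
  ge_of_tendsto hG.2.2.2 (eventually_atTop.2 ⟨y, fun _ ht => hG.1 ht⟩)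

lemma IsCDF.apply_zero_eq_one_of_tendstoInDist [IsProbabilityMeasure (ℙ : Measure Ω)]
    (hG : IsCDF G) {W : ℕ → Ω → ℝ} (hW : ∀ n, ∀ᵐ ω, W n ω ≤ 0)
    (hconv : TendstoInDist W G) : G 0 = 1 := by
  have h_one_of_pos : ∀ t > 0, G t = 1 := fun t ht => by
    obtain ⟨s, ⟨hs0, hst⟩, hs⟩ := exists_continuousAt_mem_Ioo hG.1 ht
    have hone : ∀ n, (ℙ {ω | W n ω ≤ s}).toReal = 1 := fun n => by
      rw [measure_congr (ae_eq_univ.2 (measure_mono_null (fun ω hω => ?_) (ae_iff.1 (hW n)))),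
        measure_univ, ENNReal.toReal_one]
      exact fun h => hω (h.trans hs0.le)
    have hGs : G s = 1 :=
      tendsto_nhds_unique (hconv s hs) (by simp only [hone]; exact tendsto_const_nhds)
    exact (hG.le_one t).antisymm (hGs ▸ hG.1 hst.le)
  refine tendsto_nhds_unique ((hG.2.1 0).mono Ioi_subset_Ici_self) ?_
  exact tendsto_const_nhds.congr'
    (eventually_nhdsWithin_of_forall fun t ht => (h_one_of_pos t ht).symm)

lemma IsCDF.exists_neg_continuousAt_pos (hG : IsCDF G) (hnd : NonDegenerate G) (h0 : G 0 = 1) :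
    ∃ y < 0, ContinuousAt G y ∧ 0 < G y := by
  obtain ⟨y₀, hpos, hlt⟩ := hnd
  have hy₀ : y₀ < 0 := lt_of_not_ge fun h => hlt.ne ((hG.le_one _).antisymm (h0 ▸ hG.1 h))
  obtain ⟨y, ⟨hy₀y, hy⟩, hc⟩ := exists_continuousAt_mem_Ioo hG.1 hy₀
  exact ⟨y, hy, hc, hpos.trans_le (hG.1 hy₀y.le)⟩

lemma TendstoInDist.congr {W W' : ℕ → Ω → ℝ} (h : TendstoInDist W G)
    (hWW' : ∀ᶠ n in atTop, W n =ᵐ[ℙ] W' n) : TendstoInDist W' G := fun y hy =>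
  (h y hy).congr' <| hWW'.mono fun n hn => by
    refine congrArg ENNReal.toReal (measure_congr (hn.mono fun ω hω => ?_))
    change (W n ω ≤ y) = (W' n ω ≤ y)
    rw [hω]

end DistributionFunction

lemma tendsto_zero_of_tendsto_measure_le [IsFiniteMeasure (ℙ : Measure Ω)] {V : ℕ → Ω → ℝ}
    {φ y g : ℝ} {b : ℕ → ℝ} (hb : ∀ n, 0 < b n) (hy : y < 0) (hg : 0 < g)
    (hconv : Tendsto (fun n => (ℙ {ω | (V n ω - φ) / b n ≤ y}).toReal) atTop (𝓝 g))
    (hV : ∀ c < φ, Tendsto (fun n => (ℙ {ω | V n ω ≤ c}).toReal) atTop (𝓝 0)) :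
    Tendsto b atTop (𝓝 0) := by
  refine tendsto_order.2
    ⟨fun a ha => Eventually.of_forall fun n => ha.trans (hb n), fun δ hδ => ?_⟩
  have hc : φ + δ * y < φ := by nlinarith
  filter_upwards [(tendsto_order.1 hconv).1 (g / 2) (by linarith),
    (tendsto_order.1 (hV _ hc)).2 (g / 2) (by linarith)] with n hn₁ hn₂
  by_contra! hδn
  have hsub : {ω | (V n ω - φ) / b n ≤ y} ⊆ {ω | V n ω ≤ φ + δ * y} := fun ω hω => by
    have := (div_le_iff₀ (hb n)).1 hω
    show V n ω ≤ φ + δ * y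
    nlinarith [mul_le_mul_of_nonpos_right hδn hy.le]
  linarith [ENNReal.toReal_mono (measure_ne_top _ _) (measure_mono (μ := ℙ) hsub)]

theorem statement7_general
    [IsProbabilityMeasure (ℙ : Measure Ω)]
    (X : ℕ → Ω → (Fin p → ℝ)) (Y : ℕ → Ω → ℝ) (hiid : IID X Y)
    (hpos : ∀ᵐ ω ∂ℙ, (∀ i, 0 ≤ X 0 ω i) ∧ 0 ≤ Y 0 ω)
    (x : Fin p → ℝ) (hx : 0 < margF X x)
    (hphi : BddAbove {y : ℝ | 0 ≤ y ∧ condF X Y x y < 1})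
    (b : ℕ → ℝ) (hb : ∀ n, 0 < b n)
    (G : ℝ → ℝ) (hG : IsCDF G) (hGnd : NonDegenerate G)
    (hconv : TendstoInDist (fun n ω => (fdh X Y n x ω - phi X Y x) / b n) G)
    (α : ℕ → ℝ) (hα : ∀ n, 0 < α n ∧ α n ≤ 1)
    (hrate : Tendsto (fun n : ℕ => (n : ℝ) * (1 - α n) / b n) atTop (𝓝 0)) :
    TendstoInDist (fun n ω => (empCondQ X Y n (α n) x ω - phi X Y x) / b n) G := by
  have hY0 : ∀ᵐ ω, 0 ≤ Y 0 ω := hpos.mono fun _ h => h.2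
  have hW : ∀ n, ∀ᵐ ω, (fdh X Y n x ω - phi X Y x) / b n ≤ 0 := fun n =>
    (hiid.fdh_le_phi hx hphi n).mono fun _ h =>
      div_nonpos_of_nonpos_of_nonneg (sub_nonpos.2 h) (hb n).le
  obtain ⟨y, hy, hyc, hGy⟩ :=
    hG.exists_neg_continuousAt_pos hGnd (hG.apply_zero_eq_one_of_tendstoInDist hW hconv)
  have hb0 : Tendsto b atTop (𝓝 0) :=
    tendsto_zero_of_tendsto_measure_le hb hy hGy (hconv y hyc) fun c hc =>
      hiid.tendsto_measure_fdh_le (measure_exceed_pos_of_lt_phi (hiid.1 0) hx hY0 hc)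
  have hsmall : ∀ᶠ n : ℕ in atTop, (n : ℝ) * (1 - α n) < 1 := by
    have h := hrate.mul hb0
    rw [mul_zero] at h
    exact (tendsto_order.1 (h.congr fun n => div_mul_cancel₀ _ (hb n).ne')).2 1 one_pos
  refine hconv.congr (hsmall.mono fun n hn => (hiid.ae_nonneg hY0).mono fun ω hω => ?_)
  simp only [empCondQ_eq_fdh (hα n).1 (hα n).2 hn fun i _ => hω i]

/-- Theorem 2.2(ii): if the support of `Y` is bounded above and the normalized FDH
estimator converges in distribution to `G_x`, then the same holds for
`φ̂_{α_n}(x)` whenever `α_n → 1` with `n b_n⁻¹ (1 - α_n) → 0`. -/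
theorem statement7
    [IsProbabilityMeasure (ℙ : Measure Ω)]
    (X : ℕ → Ω → (Fin p → ℝ)) (Y : ℕ → Ω → ℝ) (hiid : IID X Y)
    (hpos : ∀ᵐ ω ∂ℙ, (∀ i, 0 ≤ X 0 ω i) ∧ 0 ≤ Y 0 ω)
    (x : Fin p → ℝ) (hxpos : ∀ i, 0 ≤ x i) (hx : 0 < margF X x)
    (hphi : BddAbove {y : ℝ | 0 ≤ y ∧ condF X Y x y < 1})
    (M : ℝ) (hM : ∀ᵐ ω ∂ℙ, Y 0 ω ≤ M)
    (b : ℕ → ℝ) (hb : ∀ n, 0 < b n)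
    (G : ℝ → ℝ) (hG : IsCDF G) (hGnd : NonDegenerate G)
    (hconv : TendstoInDist (fun n ω => (fdh X Y n x ω - phi X Y x) / b n) G)
    (α : ℕ → ℝ) (hα : ∀ n, 0 < α n ∧ α n ≤ 1)
    (hα1 : Tendsto α atTop (𝓝 1))
    (hrate : Tendsto (fun n : ℕ => (n : ℝ) * (1 - α n) / b n) atTop (𝓝 0)) :
    TendstoInDist (fun n ω => (empCondQ X Y n (α n) x ω - phi X Y x) / b n) G :=
  statement7_general X Y hiid hpos x hx hphi b hb G hG hGnd hconv α hα hrate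

end FrontierEV
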